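/- Let (X,U,V) : ℝ → ℝ³ be a differentiable solution of X' = sin(X)U − cos(X)V, U' = cos X, V' = sin X. Define x(t) = X(t), u(t) = cos(X(t))·U(t) + sin(X(t))·V(t), and v(t) = −sin(X(t))·U(t) + cos(X(t))·V(t) (i.e., (u,v) is obtained from (U,V) by the rotation of angle −X). Then for all t: x'(t) = −v(t), u'(t) = 1 − v(t)², and v'(t) = u(t)·v(t). -/

import Mathlib

open Real

/-!
Differentiating in a frame rotated by `-θ` gives `(u, v)' = θ' (v, -u) + R(-θ) (U', V')`.
Here `R(-X)` sends the velocity `(cos X, sin X)` to `(1, 0)`, and `X' = -v`,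
so `u' = -v·v + 1` and `v' = v·u`.
-/

section RotatingFrame

variable {θ U V : ℝ → ℝ} {θ' U' V' t : ℝ}

theorem HasDerivAt.cos_mul_add_sin_mul (hθ : HasDerivAt θ θ' t) (hU : HasDerivAt U U' t)
    (hV : HasDerivAt V V' t) :
    HasDerivAt (fun s => Real.cos (θ s) * U s + Real.sin (θ s) * V s)
      (θ' * (-Real.sin (θ t) * U t + Real.cos (θ t) * V t) +
        (Real.cos (θ t) * U' + Real.sin (θ t) * V')) t :=
  ((hθ.cos.mul hU).add (hθ.sin.mul hV)).congr_deriv (by ring)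

theorem HasDerivAt.neg_sin_mul_add_cos_mul (hθ : HasDerivAt θ θ' t) (hU : HasDerivAt U U' t)
    (hV : HasDerivAt V V' t) :
    HasDerivAt (fun s => -Real.sin (θ s) * U s + Real.cos (θ s) * V s)
      (-θ' * (Real.cos (θ t) * U t + Real.sin (θ t) * V t) +
        (-Real.sin (θ t) * U' + Real.cos (θ t) * V')) t :=
  ((hθ.sin.fun_neg.mul hU).add (hθ.cos.mul hV)).congr_deriv (by ring)

end RotatingFrame

theorem stmt_3 (X U V : ℝ → ℝ)
    (hX : ∀ t : ℝ, HasDerivAt X (Real.sin (X t) * U t - Real.cos (X t) * V t) t)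
    (hU : ∀ t : ℝ, HasDerivAt U (Real.cos (X t)) t)
    (hV : ∀ t : ℝ, HasDerivAt V (Real.sin (X t)) t) :
    ∀ t : ℝ,
      HasDerivAt X (-(-Real.sin (X t) * U t + Real.cos (X t) * V t)) t ∧
      HasDerivAt (fun s => Real.cos (X s) * U s + Real.sin (X s) * V s)
        (1 - (-Real.sin (X t) * U t + Real.cos (X t) * V t) ^ 2) t ∧
      HasDerivAt (fun s => -Real.sin (X s) * U s + Real.cos (X s) * V s)
        ((Real.cos (X t) * U t + Real.sin (X t) * V t) *
          (-Real.sin (X t) * U t + Real.cos (X t) * V t)) t := by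
  intro t
  have hx : HasDerivAt X (-(-sin (X t) * U t + cos (X t) * V t)) t :=
    (hX t).congr_deriv (by ring)
  exact ⟨hx,
    (hx.cos_mul_add_sin_mul (hU t) (hV t)).congr_deriv
      (by linear_combination sin_sq_add_cos_sq (X t)),
    (hx.neg_sin_mul_add_cos_mul (hU t) (hV t)).congr_deriv (by ring)⟩
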